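/- arXiv:2403.05395 — 2 statements merged into one kernel-verified Lean document; each statement's English description precedes it below -/
import Mathlib

section
/- Let (θ_τ) be a sequence in ℝ^p converging to θ_∞, let (f_τ) be a nonnegative sequence converging to 0, and suppose V_τ = ψ(f_τ) + α∑_{i=0}^{τ−1}‖θ_{i+1} − θ_i‖ is non-increasing for some α > 0 and continuous increasing ψ with ψ(0) = 0. Then for every τ, ‖θ_τ − θ_∞‖ ≤ (1/α) ψ(f_τ). -/
open Set Filter Topology

/-- rate of convergence of the iterates from the non-increasing Lyapunov sequence. -/
theorem stmt6 {p : ℕ} (θ : ℕ → EuclideanSpace ℝ (Fin p))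
    (θinf : EuclideanSpace ℝ (Fin p)) (fseq : ℕ → ℝ) (ψ : ℝ → ℝ) (α : ℝ)
    (hα : 0 < α)
    (hθ : Tendsto θ atTop (𝓝 θinf))
    (hfpos : ∀ τ, 0 ≤ fseq τ)
    (hf0 : Tendsto fseq atTop (𝓝 0))
    (hψc : Continuous ψ) (hψm : StrictMono ψ) (hψ0 : ψ 0 = 0)
    (hV : ∀ τ, ψ (fseq (τ + 1)) + α * ∑ i ∈ Finset.range (τ + 1), ‖θ (i + 1) - θ i‖
        ≤ ψ (fseq τ) + α * ∑ i ∈ Finset.range τ, ‖θ (i + 1) - θ i‖) :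
    ∀ τ, ‖θ τ - θinf‖ ≤ (1 / α) * ψ (fseq τ) := by
  have hstep : ∀ τ, α * ‖θ (τ + 1) - θ τ‖ ≤ ψ (fseq τ) - ψ (fseq (τ + 1)) := by
    intro τ
    have := hV τ
    rw [Finset.sum_range_succ, mul_add] at this
    linarith
  have hψnn : ∀ τ, 0 ≤ ψ (fseq τ) := by
    intro τ
    rw [← hψ0]
    exact (hψm.le_iff_le).2 (hfpos τ)
  have key : ∀ τ n, ‖θ (τ + n) - θ τ‖ ≤ (1 / α) * (ψ (fseq τ) - ψ (fseq (τ + n))) := by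
    intro τ n
    induction n with
    | zero => simp
    | succ n ih =>
      have h1 : ‖θ (τ + (n + 1)) - θ τ‖ ≤ ‖θ (τ + n + 1) - θ (τ + n)‖ + ‖θ (τ + n) - θ τ‖ := by
        have := norm_sub_le_norm_sub_add_norm_sub (θ (τ + n + 1)) (θ (τ + n)) (θ τ)
        simpa [add_assoc] using this
      have h2 := hstep (τ + n)
      have h3 : ‖θ (τ + n + 1) - θ (τ + n)‖ ≤ (1 / α) * (ψ (fseq (τ + n)) - ψ (fseq (τ + n + 1))) := by
        rw [one_div, ← div_eq_inv_mul, le_div_iff₀ hα]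
        linarith
      calc ‖θ (τ + (n + 1)) - θ τ‖ ≤ ‖θ (τ + n + 1) - θ (τ + n)‖ + ‖θ (τ + n) - θ τ‖ := h1
        _ ≤ (1 / α) * (ψ (fseq (τ + n)) - ψ (fseq (τ + n + 1))) + (1 / α) * (ψ (fseq τ) - ψ (fseq (τ + n))) := by
            exact add_le_add h3 ih
        _ = (1 / α) * (ψ (fseq τ) - ψ (fseq (τ + (n + 1)))) := by
            rw [show τ + (n + 1) = τ + n + 1 from rfl]; ring
  intro τ
  have hbound : ∀ n, ‖θ (τ + n) - θ τ‖ ≤ (1 / α) * ψ (fseq τ) := by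
    intro n
    refine (key τ n).trans ?_
    have := hψnn (τ + n)
    have h1α : 0 ≤ (1 : ℝ) / α := by positivity
    nlinarith
  have htend : Tendsto (fun n => ‖θ (τ + n) - θ τ‖) atTop (𝓝 ‖θinf - θ τ‖) := by
    have : Tendsto (fun n => θ (τ + n)) atTop (𝓝 θinf) :=
      hθ.comp (tendsto_atTop_mono (fun n => Nat.le_add_left n τ) tendsto_id)
    exact ((this.sub tendsto_const_nhds).norm)
  have := le_of_tendsto htend (Filter.Eventually.of_forall hbound)
  rwa [norm_sub_rev] at this
end

section
/- Let A : ℝ^n → ℝ^m be linear, Σ' ⊆ ℝ^n nonempty closed, x* ∈ ℝ^n, and x*_Σ a projection of x* onto Σ' (a minimizer of ‖x* − z‖ over z ∈ Σ'). Suppose λ := inf{‖A z‖/‖z‖ : z ∈ T(x*_Σ), z ≠ 0} > 0, where T(x*_Σ) is the tangent cone of Σ' at x*_Σ, and suppose x − x*_Σ ∈ T(x*_Σ) for a given x ∈ Σ'. Let y* = A x* and y = y* + ε, and suppose ‖A x − y‖ ≤ δ. Then ‖x − x*‖ ≤ δ/λ + (1 + ‖A‖/λ) dist(x*, Σ') +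 ‖ε‖/λ. -/
open Set

/-- recovery error bound under restricted injectivity on the tangent cone. -/
theorem stmt7 {n m : ℕ}
    (A : EuclideanSpace ℝ (Fin n) →L[ℝ] EuclideanSpace ℝ (Fin m))
    (SigS : Set (EuclideanSpace ℝ (Fin n))) (hne : SigS.Nonempty) (hcl : IsClosed SigS)
    (xstar xS x : EuclideanSpace ℝ (Fin n)) (ε : EuclideanSpace ℝ (Fin m))
    (lam δ : ℝ)
    (hxS : xS ∈ SigS) (hproj : ∀ z ∈ SigS, ‖xstar - xS‖ ≤ ‖xstar - z‖)
    (hlam : 0 < lam)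
    (hcone : ∀ z ∈ tangentConeAt ℝ SigS xS, lam * ‖z‖ ≤ ‖A z‖)
    (hx : x ∈ SigS) (hxT : x - xS ∈ tangentConeAt ℝ SigS xS)
    (hres : ‖A x - (A xstar + ε)‖ ≤ δ) :
    ‖x - xstar‖ ≤ δ / lam + (1 + ‖A‖ / lam) * Metric.infDist xstar SigS + ‖ε‖ / lam := by
  set d := ‖xstar - xS‖ with hd
  have hinf : Metric.infDist xstar SigS = d := by
    apply le_antisymm
    · simpa [dist_eq_norm] using Metric.infDist_le_dist_of_mem hxS
    · by_contra h
      push_neg at h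
      obtain ⟨z, hz, hzd⟩ := (Metric.infDist_lt_iff hne).mp h
      rw [dist_eq_norm] at hzd
      exact absurd (hproj z hz) (by linarith)
  have h1 : lam * ‖x - xS‖ ≤ ‖A (x - xS)‖ := hcone _ hxT
  have h2 : ‖A (x - xS)‖ ≤ δ + ‖ε‖ + ‖A‖ * d := by
    have heq : A (x - xS) = (A x - (A xstar + ε)) + ε + A (xstar - xS) := by
      simp only [map_sub]; abel
    calc ‖A (x - xS)‖ ≤ ‖A x - (A xstar + ε)‖ + ‖ε‖ + ‖A (xstar - xS)‖ := by
          rw [heq]; exact norm_add₃_le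
      _ ≤ δ + ‖ε‖ + ‖A‖ * d := by
          gcongr
          exact A.le_opNorm _
  have h3 : ‖x - xstar‖ ≤ ‖x - xS‖ + d := by
    have : x - xstar = (x - xS) + -(xstar - xS) := by abel
    rw [this]
    calc ‖x - xS + -(xstar - xS)‖ ≤ ‖x - xS‖ + ‖-(xstar - xS)‖ := norm_add_le _ _
      _ = ‖x - xS‖ + d := by rw [norm_neg]
  have h4 : lam * ‖x - xS‖ ≤ δ + ‖ε‖ + ‖A‖ * d := le_trans h1 h2
  rw [hinf]
  have h5 : ‖x - xS‖ ≤ (δ + ‖ε‖ + ‖A‖ * d) / lam := (le_div_iff₀ hlam).mpr (by linarith)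
  have h6 : δ / lam + (1 + ‖A‖ / lam) * d + ‖ε‖ / lam = (δ + ‖ε‖ + ‖A‖ * d) / lam + d := by
    field_simp; ring
  rw [h6]; linarith
end
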